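/- Let T be a positive integer, let v : Fin T → ℂ, and let C = Matrix.circulant v. Then the nuclear norm of C equals the ℓ1 norm of the discrete Fourier transform of v: the sum over k ∈ Fin T of the square roots of the eigenvalues of the Hermitian positive semidefinite matrix Cᴴ · C equals ∑_{k=0}^{T−1} |∑_{m=0}^{T−1} v(m)·exp(−2πi·m·k/T)|. That is, ‖C(v)‖_* = ‖DFT(v)‖_1. -/

import Mathlib

/-!
The characters `ψ k : j ↦ ζ ^ (k * j)` of `ℤ/T`, `ζ = exp (2πi/T)`, are common eigenvectors of all
circulant matrices: `C(v) ψ k = λ k • ψ k` with `λ = DFT v`, and since `ψ k (-m) = conj (ψ k m)` the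
adjoint `C(v)ᴴ` acts on `ψ k` by `conj (λ k)`. The matrix with columns `ψ k` is a Vandermonde matrix
in distinct roots of unity, hence invertible, so `C(v)ᴴ C(v)` is similar to `diagonal (|λ k|²)`.
Similar matrices share their characteristic polynomial, whose roots are the eigenvalues of the
Hermitian matrix `C(v)ᴴ C(v)`; their square roots are the `|λ k|`.
-/

open Matrix Complex

namespace AddChar

def finPow {M : Type*} [CommMonoid M] {T : ℕ} [NeZero T] {ζ : M} (hζ : ζ ^ T = 1) :
    AddChar (Fin T) M where
  toFun j := ζ ^ (j : ℕ)
  map_zero_eq_one' := by simp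
  map_add_eq_mul' a b := by rw [Fin.val_add, ← pow_eq_pow_mod _ hζ, pow_add]

def finPowChars {M : Type*} [CommMonoid M] {T : ℕ} [NeZero T] {ζ : M} (hζ : ζ ^ T = 1)
    (k : Fin T) : AddChar (Fin T) M :=
  finPow (ζ := ζ ^ (k : ℕ)) (by rw [pow_right_comm, hζ, one_pow])

@[simp]
lemma finPowChars_apply {M : Type*} [CommMonoid M] {T : ℕ} [NeZero T] {ζ : M} (hζ : ζ ^ T = 1)
    (k j : Fin T) : finPowChars hζ k j = (ζ ^ (k : ℕ)) ^ (j : ℕ) := rfl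

theorem isUnit_finPowChars_matrix {K : Type*} [Field K] {T : ℕ} [NeZero T] {ζ : K}
    (hζ : IsPrimitiveRoot ζ T) :
    IsUnit (of fun j k : Fin T => finPowChars hζ.pow_eq_one k j) := by
  have hV : (of fun j k : Fin T => finPowChars hζ.pow_eq_one k j) =
      (vandermonde fun k : Fin T => ζ ^ (k : ℕ))ᵀ := rfl
  rw [hV, isUnit_iff_isUnit_det, det_transpose, isUnit_iff_ne_zero, det_vandermonde_ne_zero_iff]
  exact fun i j hij => Fin.ext (hζ.pow_inj i.isLt j.isLt hij)

end AddChar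

section Circulant

variable {G R : Type*} [AddCommGroup G] [Fintype G] [CommRing R]

theorem circulant_mulVec_addChar (v : G → R) (ψ : AddChar G R) :
    circulant v *ᵥ ⇑ψ = (∑ m, v m * ψ (-m)) • ⇑ψ := by
  ext i
  simp only [mulVec, dotProduct, circulant_apply, Pi.smul_apply, smul_eq_mul, Finset.sum_mul]
  rw [← (Equiv.subLeft i).sum_comp]
  refine Finset.sum_congr rfl fun m _ => ?_
  rw [Equiv.subLeft_apply, sub_sub_cancel, sub_eq_add_neg, AddChar.map_add_eq_mul]
  ring

theorem circulant_mul_addChar_matrix {ι : Type*} [Fintype ι] [DecidableEq ι] (v : G → R)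
    (ψ : ι → AddChar G R) :
    circulant v * of (fun j k => ψ k j) =
      of (fun j k => ψ k j) * diagonal (fun k => ∑ m, v m * ψ k (-m)) := by
  ext j k
  rw [mul_diagonal, mul_apply]
  simpa [mulVec, dotProduct, mul_comm] using congrFun (circulant_mulVec_addChar v (ψ k)) j

end Circulant

section Hermitian

variable {G K : Type*} [AddCommGroup G] [Fintype G] [RCLike K]

theorem conjTranspose_circulant_mul_addChar_matrix {ι : Type*} [Fintype ι] [DecidableEq ι]
    (v : G → K) (ψ : ι → AddChar G K) :
    (circulant v)ᴴ * of (fun j k => ψ k j) =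
      of (fun j k => ψ k j) * diagonal (fun k => starRingEnd K (∑ m, v m * ψ k (-m))) := by
  rw [conjTranspose_circulant, circulant_mul_addChar_matrix]
  congr 2
  ext k
  rw [map_sum, ← Equiv.sum_comp (Equiv.neg G)]
  refine Finset.sum_congr rfl fun m _ => ?_
  simp [AddChar.map_neg_eq_conj]

theorem conjTranspose_circulant_mul_circulant_mul_addChar_matrix {ι : Type*} [Fintype ι]
    [DecidableEq ι] (v : G → K) (ψ : ι → AddChar G K) :
    (circulant v)ᴴ * circulant v * of (fun j k => ψ k j) =
      of (fun j k => ψ k j) *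
        diagonal (fun k => ((‖∑ m, v m * ψ k (-m)‖ ^ 2 : ℝ) : K)) := by
  rw [Matrix.mul_assoc, circulant_mul_addChar_matrix, ← Matrix.mul_assoc,
    conjTranspose_circulant_mul_addChar_matrix, Matrix.mul_assoc, diagonal_mul_diagonal]
  simp only [RCLike.conj_mul, RCLike.ofReal_pow]

end Hermitian

open Polynomial in
theorem Matrix.IsHermitian.eigenvalues_map_eq_of_mul_eq_mul_diagonal {n 𝕜 : Type*} [Fintype n]
    [DecidableEq n] [RCLike 𝕜]
    {A : Matrix n n 𝕜} (hA : A.IsHermitian) (P : (Matrix n n 𝕜)ˣ) (d : n → ℝ)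
    (h : A * P = P * diagonal (fun i => (d i : 𝕜))) :
    Finset.univ.val.map hA.eigenvalues = Finset.univ.val.map d := by
  have hA' : A = P * diagonal (fun i => (d i : 𝕜)) * (P : Matrix n n 𝕜)⁻¹ := by
    rw [← h, mul_assoc, ← coe_units_inv, Units.mul_inv, mul_one]
  have hroots : A.charpoly.roots = (Finset.univ.val.map d).map (↑) := by
    rw [hA', charpoly_units_conj, charpoly_diagonal, Finset.prod_eq_multiset_prod]
    convert roots_multiset_prod_X_sub_C ((Finset.univ.val.map d).map ((↑) : ℝ → 𝕜)) using 3
    rw [Multiset.map_map, Multiset.map_map]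
    rfl
  rw [hA.roots_charpoly_eq_eigenvalues, ← Multiset.map_map] at hroots
  exact Multiset.map_injective RCLike.ofReal_injective hroots

/-- **Convolution nuclear norm equals Fourier ℓ1 norm.** For a positive integer `T`
and `v : Fin T → ℂ`, the nuclear norm of the circulant matrix `C = Matrix.circulant v`
(the sum of the square roots of the eigenvalues of the Hermitian matrix `Cᴴ · C`)
equals the ℓ1 norm of the DFT of `v`. -/
theorem nuclearNorm_circulant_eq_l1_dft (T : ℕ) (hT : 0 < T) (v : Fin T → ℂ)
    (hA : ((Matrix.circulant v)ᴴ * Matrix.circulant v).IsHermitian) :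
    ∑ k : Fin T, Real.sqrt (hA.eigenvalues k) =
      ∑ k : Fin T,
        ‖(∑ m : Fin T,
            v m * Complex.exp (-(2 * (Real.pi : ℂ) * Complex.I * ((m : ℕ) : ℂ) * ((k : ℕ) : ℂ) / (T : ℂ))))‖ := by
  have : NeZero T := ⟨hT.ne'⟩
  have hζ : IsPrimitiveRoot (exp (2 * Real.pi * I / T)) T := isPrimitiveRoot_exp T hT.ne'
  obtain ⟨P, hP⟩ := AddChar.isUnit_finPowChars_matrix hζ
  have hdiag := conjTranspose_circulant_mul_circulant_mul_addChar_matrix v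
    (AddChar.finPowChars hζ.pow_eq_one)
  rw [← hP] at hdiag
  have hspec := congrArg (fun s => (s.map Real.sqrt).sum)
    (hA.eigenvalues_map_eq_of_mul_eq_mul_diagonal P _ hdiag)
  simp only [Multiset.map_map] at hspec
  refine hspec.trans (Finset.sum_congr rfl fun k _ => ?_)
  rw [Function.comp_apply, Real.sqrt_sq (norm_nonneg _)]
  congr 1
  refine Finset.sum_congr rfl fun m _ => ?_
  rw [AddChar.map_neg_eq_inv, AddChar.finPowChars_apply, ← pow_mul, ← exp_nat_mul, ← exp_neg]
  congr 3
  push_cast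
  ring
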